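/- arXiv:math/0401153 — 4 statements merged into one kernel-verified Lean document; each statement's English description precedes it below -/
import Mathlib

section
/- For every natural number k, the ℂ-vector space 𝒱ᵏ of harmonic polynomials in ℂ[X₀,X₁,X₂,X₃] that are homogeneous of degree k has dimension (k+1)². -/
open MvPolynomial

/-- The formal Laplacian `Δ₀ p = ∑ μ, ∂²p/∂X_μ²` on `ℂ[X₀,X₁,X₂,X₃]`. -/
noncomputable def lap : MvPolynomial (Fin 4) ℂ →ₗ[ℂ] MvPolynomial (Fin 4) ℂ :=
  ∑ μ : Fin 4,
    ((MvPolynomial.pderiv μ).toLinearMap ∘ₗ (MvPolynomial.pderiv μ).toLinearMap)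

/-- `𝒱ᵏ`: the subspace of harmonic polynomials homogeneous of degree `k`. -/
noncomputable def Vk (k : ℕ) : Submodule ℂ (MvPolynomial (Fin 4) ℂ) :=
  MvPolynomial.homogeneousSubmodule (Fin 4) ℂ k ⊓ LinearMap.ker lap

/-! For `q` homogeneous of degree `d` in `n` variables, Euler's identity gives
`Δ(r² q) = (2n + 4d) q + r² Δq`, where `r² = ∑ Xᵢ²`, and iterating,
`Δ(r^(2m+2) q) = c r^(2m) q + r^(2m+2) Δq` with `c = (m+1)(2n + 4(d+m)) ≠ 0`.
So if `Δ(r^(2m+2) q) = 0` then `r² Δq = -c q`, whence `Δ(r^(2m+4) Δq) = 0`; by induction on the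
degree `Δq = 0`, and then `q = 0`. Hence `q ↦ Δ(r² q)` is injective on the finite-dimensional
space `𝒫ᵏ` of homogeneous polynomials of degree `k`, so `Δ : 𝒫ᵏ⁺² → 𝒫ᵏ` is onto and
`dim 𝒱ᵏ⁺² = dim 𝒫ᵏ⁺² - dim 𝒫ᵏ = C(k+5, 3) - C(k+3, 3) = (k+3)²`, while `𝒱⁰ = 𝒫⁰` and `𝒱¹ = 𝒫¹`.
-/

namespace MvPolynomial

variable {σ R : Type*} [Fintype σ]

section CommSemiring

variable [CommSemiring R]

noncomputable def laplacian : MvPolynomial σ R →ₗ[R] MvPolynomial σ R :=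
  ∑ i, (pderiv i).toLinearMap ∘ₗ (pderiv i).toLinearMap

theorem laplacian_apply (p : MvPolynomial σ R) : laplacian p = ∑ i, pderiv i (pderiv i p) := by
  simp [laplacian, LinearMap.sum_apply]

theorem IsHomogeneous.laplacian {p : MvPolynomial σ R} {n : ℕ} (h : p.IsHomogeneous n) :
    (laplacian p).IsHomogeneous (n - 2) := by
  rw [laplacian_apply]
  exact IsHomogeneous.sum _ _ _ fun i _ => by simpa [Nat.sub_sub] using h.pderiv.pderiv

theorem laplacian_eq_zero_of_isHomogeneous {p : MvPolynomial σ R} {n : ℕ}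
    (h : p.IsHomogeneous n) (hn : n < 2) : laplacian p = 0 := by
  rw [laplacian_apply]
  refine Finset.sum_eq_zero fun i _ => ?_
  have h' : (pderiv i p).IsHomogeneous 0 := by simpa [show n - 1 = 0 by omega] using h.pderiv
  rw [← totalDegree_zero_iff_isHomogeneous, totalDegree_eq_zero_iff_eq_C] at h'
  rw [h', pderiv_C]

theorem laplacian_mul (f g : MvPolynomial σ R) :
    laplacian (f * g) =
      laplacian f * g + 2 * ∑ i, pderiv i f * pderiv i g + f * laplacian g := by
  simp only [laplacian_apply, pderiv_mul, map_add, Finset.mul_sum, Finset.sum_mul,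
    ← Finset.sum_add_distrib]
  exact Finset.sum_congr rfl fun i _ => by ring

variable (σ R) in
noncomputable def harmonicSubmodule (k : ℕ) : Submodule R (MvPolynomial σ R) :=
  homogeneousSubmodule σ R k ⊓ LinearMap.ker laplacian

theorem harmonicSubmodule_le_homogeneousSubmodule {k : ℕ} :
    harmonicSubmodule σ R k ≤ homogeneousSubmodule σ R k :=
  inf_le_left

theorem harmonicSubmodule_eq_of_lt_two {k : ℕ} (hk : k < 2) :
    harmonicSubmodule σ R k = homogeneousSubmodule σ R k :=
  inf_eq_left.mpr fun _ hp => laplacian_eq_zero_of_isHomogeneous hp hk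

variable (σ R) in
noncomputable def homogeneousLaplacian (k : ℕ) :
    homogeneousSubmodule σ R (k + 2) →ₗ[R] homogeneousSubmodule σ R k :=
  laplacian.restrict fun _ hp => by simpa using IsHomogeneous.laplacian hp

noncomputable def sumXSq : MvPolynomial σ R := ∑ i, X i ^ 2

theorem isHomogeneous_sumXSq : (sumXSq : MvPolynomial σ R).IsHomogeneous 2 :=
  IsHomogeneous.sum _ _ _ fun i _ => isHomogeneous_X_pow i 2

theorem pderiv_sumXSq (i : σ) : pderiv i (sumXSq : MvPolynomial σ R) = 2 * X i := by
  classical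
  simp [sumXSq, pderiv_X, Pi.single_apply]

theorem laplacian_sumXSq : laplacian (sumXSq : MvPolynomial σ R) = 2 * Fintype.card σ := by
  have h (i : σ) : pderiv i (2 * X i : MvPolynomial σ R) = 2 := by
    rw [pderiv_mul, ← map_ofNat C 2, pderiv_C]
    simp
  simp only [laplacian_apply, pderiv_sumXSq, h]
  simp [mul_comm]

theorem laplacian_sumXSq_mul {q : MvPolynomial σ R} {d : ℕ} (hq : q.IsHomogeneous d) :
    laplacian (sumXSq * q) =
      ((2 * Fintype.card σ + 4 * d : ℕ) : MvPolynomial σ R) * q + sumXSq * laplacian q := by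
  have euler : ∑ i, pderiv i sumXSq * pderiv i q = 2 * (d • q) := by
    simp only [pderiv_sumXSq, mul_assoc, ← Finset.mul_sum, hq.sum_X_mul_pderiv]
  rw [laplacian_mul, laplacian_sumXSq, euler, nsmul_eq_mul]
  push_cast
  ring

variable (σ R) in
noncomputable def mulSumXSq (k : ℕ) :
    homogeneousSubmodule σ R k →ₗ[R] homogeneousSubmodule σ R (k + 2) :=
  (LinearMap.mulLeft R sumXSq).restrict fun _ hp => by
    simpa [add_comm] using isHomogeneous_sumXSq.mul hp

theorem laplacian_sumXSq_pow_mul {q : MvPolynomial σ R} {d : ℕ} (hq : q.IsHomogeneous d)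
    (m : ℕ) :
    laplacian (sumXSq ^ (m + 1) * q) =
      (((m + 1) * (2 * Fintype.card σ + 4 * (d + m)) : ℕ) : MvPolynomial σ R) * (sumXSq ^ m * q) +
        sumXSq ^ (m + 1) * laplacian q := by
  induction m generalizing q d with
  | zero => simpa using laplacian_sumXSq_mul hq
  | succ m ih =>
    have hq' : (sumXSq * q).IsHomogeneous (d + 2) := by
      simpa [add_comm] using isHomogeneous_sumXSq.mul hq
    rw [pow_succ, mul_assoc, ih hq', laplacian_sumXSq_mul hq]
    push_cast
    ring

end CommSemiring

section CommRing

variable [CommRing R] [CharZero R] [Nonempty σ]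

theorem sumXSq_ne_zero : (sumXSq : MvPolynomial σ R) ≠ 0 := by
  intro h
  have := congrArg (eval fun _ => (1 : R)) h
  simp [sumXSq] at this

variable [IsDomain R]

theorem eq_zero_of_laplacian_sumXSq_pow_mul_eq_zero {q : MvPolynomial σ R} {d : ℕ}
    (hq : q.IsHomogeneous d) {m : ℕ} (h : laplacian (sumXSq ^ (m + 1) * q) = 0) : q = 0 := by
  induction d using Nat.strong_induction_on generalizing q m with
  | _ d ih =>
    set c : ℕ := (m + 1) * (2 * Fintype.card σ + 4 * (d + m))
    have hc : c ≠ 0 := by positivity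
    have hcq : (c : MvPolynomial σ R) * q + sumXSq * laplacian q = 0 := by
      rw [laplacian_sumXSq_pow_mul hq, pow_succ] at h
      refine (mul_eq_zero.mp ?_).resolve_left (pow_ne_zero m sumXSq_ne_zero)
      rw [← h]
      ring
    have hΔq : laplacian q = 0 := by
      obtain hd | hd := lt_or_ge d 2
      · exact laplacian_eq_zero_of_isHomogeneous hq hd
      have h' : laplacian (sumXSq ^ (m + 1 + 1) * laplacian q) = 0 := by
        rw [pow_succ, mul_assoc, eq_neg_of_add_eq_zero_right hcq, mul_neg, map_neg, mul_left_comm,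
          ← nsmul_eq_mul, map_nsmul, h, smul_zero, neg_zero]
      exact ih (d - 2) (by omega) hq.laplacian h'
    simpa [hΔq, hc] using hcq

end CommRing

section Field

variable (σ) (K : Type*) [Field K]

theorem finrank_homogeneousSubmodule (k : ℕ) :
    Module.finrank K (homogeneousSubmodule σ K k) = (Fintype.card σ + k - 1).choose k := by
  classical
  have hdeg : {d : σ →₀ ℕ | d.degree = k} = ↑((Finset.univ : Finset σ).finsuppAntidiag k) := by
    ext d
    simp [Finsupp.degree_eq_sum]
  rw [homogeneousSubmodule_eq_finsupp_supported, hdeg,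
    (AddMonoidAlgebra.supportedEquivFinsupp _).finrank_eq, Module.finrank_finsupp_self]
  simp [Finset.card_finsuppAntidiag_nat_eq_choose]

instance (k : ℕ) : FiniteDimensional K (homogeneousSubmodule σ K k) :=
  Submodule.finiteDimensional_of_le (S₂ := restrictTotalDegree σ K k) fun _ hp =>
    (mem_restrictTotalDegree _ _ _).mpr (IsHomogeneous.totalDegree_le hp)

variable [CharZero K] [Nonempty σ]

theorem homogeneousLaplacian_surjective (k : ℕ) :
    Function.Surjective (homogeneousLaplacian σ K k) := by
  have hinj : Function.Injective (homogeneousLaplacian σ K k ∘ₗ mulSumXSq σ K k) := by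
    rw [← LinearMap.ker_eq_bot, Submodule.eq_bot_iff]
    intro q hq
    have h : laplacian (sumXSq ^ (0 + 1) * (q : MvPolynomial σ K)) = 0 := by
      simpa [homogeneousLaplacian, mulSumXSq, Subtype.ext_iff] using hq
    exact Subtype.ext (eq_zero_of_laplacian_sumXSq_pow_mul_eq_zero q.2 h)
  exact Function.Surjective.of_comp (g := mulSumXSq σ K k)
    (LinearMap.injective_iff_surjective.mp hinj)

theorem finrank_harmonicSubmodule_add_finrank_homogeneousSubmodule (k : ℕ) :
    Module.finrank K (harmonicSubmodule σ K (k + 2)) +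
      Module.finrank K (homogeneousSubmodule σ K k) =
        Module.finrank K (homogeneousSubmodule σ K (k + 2)) := by
  have hker : LinearMap.ker (homogeneousLaplacian σ K k) =
      (harmonicSubmodule σ K (k + 2)).comap (homogeneousSubmodule σ K (k + 2)).subtype := by
    rw [homogeneousLaplacian, LinearMap.ker_restrict, harmonicSubmodule, Submodule.comap_inf,
      Submodule.comap_subtype_self, top_inf_eq]
  rw [← LinearMap.finrank_range_add_finrank_ker (homogeneousLaplacian σ K k),
    LinearMap.range_eq_top.mpr (homogeneousLaplacian_surjective σ K k), finrank_top,
    hker, (Submodule.comapSubtypeEquivOfLe harmonicSubmodule_le_homogeneousSubmodule).finrank_eq,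
    add_comm]

end Field

end MvPolynomial

theorem Nat.add_five_choose_add_two (k : ℕ) :
    (k + 5).choose (k + 2) = (k + 3).choose k + (k + 3) ^ 2 := by
  have h := Nat.add_one_mul_choose_eq (k + 2) 1
  rw [Nat.choose_one_right] at h
  rw [show k + 5 = (k + 2) + 3 by ring, Nat.choose_symm_add, Nat.choose_symm_add,
    Nat.choose_succ_succ' (k + 4), Nat.choose_succ_succ' (k + 3) 2,
    Nat.choose_succ_succ' (k + 3) 1, Nat.choose_one_right]
  nlinarith [h]

/-- `dim 𝒱ᵏ = (k+1)²`. -/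
theorem finrank_Vk (k : ℕ) : Module.finrank ℂ (Vk k) = (k + 1) ^ 2 := by
  have hV : Vk k = harmonicSubmodule (Fin 4) ℂ k := rfl
  have hP (n : ℕ) : Module.finrank ℂ (homogeneousSubmodule (Fin 4) ℂ n) = (n + 3).choose n := by
    rw [finrank_homogeneousSubmodule, Fintype.card_fin]
    congr 1
    omega
  rw [hV]
  rcases k with _ | _ | k
  · rw [harmonicSubmodule_eq_of_lt_two (by norm_num), hP]
    rfl
  · rw [harmonicSubmodule_eq_of_lt_two (by norm_num), hP]
    rfl
  · have h := finrank_harmonicSubmodule_add_finrank_homogeneousSubmodule (Fin 4) ℂ k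
    rw [hP, hP, Nat.add_five_choose_add_two] at h
    linarith
end

section
/- Let k be an even natural number. The (k+1)² polynomials Φᵏ_IJ = (X·N_IJ)^k, for I,J ∈ {0,…,k}, form a linearly independent family in the ℂ-vector space ℂ[X₀,X₁,X₂,X₃]. -/
open MvPolynomial

/-- The linear polynomial `X·N = ∑ μ, N^μ X_μ` in `ℂ[X₀,X₁,X₂,X₃]`. -/
noncomputable def linPoly (N : Fin 4 → ℂ) : MvPolynomial (Fin 4) ℂ :=
  ∑ μ, MvPolynomial.C (N μ) * MvPolynomial.X μ

/-- The family of null vectors `N(a,b) = (cos a, i sin b, i cos b, sin a) ∈ ℂ⁴`. -/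
noncomputable def Ngen (a b : ℝ) : Fin 4 → ℂ :=
  ![(Real.cos a : ℂ), Complex.I * (Real.sin b : ℂ), Complex.I * (Real.cos b : ℂ),
    (Real.sin a : ℂ)]

/-- `α := 2π/(k+1)`. -/
noncomputable def alphaK (k : ℕ) : ℝ := 2 * Real.pi / (k + 1)

/-- The null vectors `N_IJ := N(Iα, Jα)`. -/
noncomputable def NIJ (k I J : ℕ) : Fin 4 → ℂ := Ngen (I * alphaK k) (J * alphaK k)

/-- The polynomials `Φᵏ_IJ := (X·N_IJ)^k`. -/
noncomputable def Phi (k I J : ℕ) : MvPolynomial (Fin 4) ℂ := (linPoly (NIJ k I J)) ^ k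

/-!
Substituting `X₀ = s + t`, `X₁ = 1 - st`, `X₂ = -i(1 + st)`, `X₃ = i(s - t)` turns `X·N(a,b)` into
`(e^{ia} s + e^{ib}) (1 + e^{-ia} e^{-ib} t)`. Hence, with `ε = e^{2πi/(k+1)}`, the coefficient of
`sⁱ tᵐ` in the image of `Φᵏ_IJ` is `C(k,i) C(k,m) ε^{-J} ε^{i(I-J) - m(I+J)}`. After dividing out
the binomial coefficients, these are (up to the nonzero scalars `ε^{-J}`) the characters of
`(ℤ/(k+1))²` with frequencies `(I - J, -(I + J))`. These frequencies are pairwise distinct because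
`2` is invertible modulo the odd number `k + 1`, and distinct characters are linearly independent.
-/

namespace Polynomial

theorem coeff_C_mul_X_add_C_pow {R : Type*} [CommSemiring R] (a b : R) (n i : ℕ) :
    ((C a * X + C b) ^ n).coeff i = a ^ i * b ^ (n - i) * n.choose i := by
  rw [add_pow, finsetSum_coeff]
  simp_rw [mul_pow, ← C_pow, ← C_eq_natCast, mul_assoc, mul_comm (X ^ _), ← mul_assoc, ← C_mul,
    coeff_C_mul_X_pow]
  rw [Finset.sum_ite_eq]
  split_ifs with h
  · rfl
  · rw [Finset.mem_range, not_lt] at h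
    rw [Nat.choose_eq_zero_of_lt (by omega), Nat.cast_zero, mul_zero]

end Polynomial

-- In `ℂ[X][X]` the variable `s` is the inner `C X` and `t` the outer `X`.
open Polynomial in
noncomputable def nullSubst : MvPolynomial (Fin 4) ℂ →ₐ[ℂ] ℂ[X][X] :=
  aeval ![Polynomial.C Polynomial.X + Polynomial.X, 1 - Polynomial.C Polynomial.X * Polynomial.X,
    -Complex.I • (1 + Polynomial.C Polynomial.X * Polynomial.X),
    Complex.I • (Polynomial.C Polynomial.X - Polynomial.X)]

open Complex Polynomial in
theorem nullSubst_linPoly_Ngen (a b : ℝ) :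
    nullSubst (linPoly (Ngen a b)) =
      Polynomial.C (Polynomial.C (exp (a * I)) * Polynomial.X + Polynomial.C (exp (b * I))) *
        (Polynomial.C (Polynomial.C (exp (-a * I) * exp (-b * I))) * Polynomial.X + 1) := by
  set s : ℂ[X][X] := Polynomial.C Polynomial.X
  set t : ℂ[X][X] := Polynomial.X
  set f := fun z : ℂ => (Polynomial.C (Polynomial.C z) : ℂ[X][X])
  have hI : f I * f I = -1 := by simp only [f, ← map_mul, I_mul_I, map_neg, map_one]
  have hexp : ∀ x : ℝ, f (exp (x * I)) * f (exp (-x * I)) = 1 := fun x => by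
    simp only [f, ← map_mul, ← Complex.exp_add, add_neg_cancel, neg_mul, Complex.exp_zero, map_one]
  have hcos_sin : ∀ x : ℝ, exp (x * I) = Real.cos x + Real.sin x * I ∧
      exp (-x * I) = Real.cos x - Real.sin x * I := fun x =>
    ⟨by rw [exp_mul_I, ← ofReal_cos, ← ofReal_sin],
      by rw [exp_mul_I, cos_neg, sin_neg, ← ofReal_cos, ← ofReal_sin]; ring⟩
  have hlin : nullSubst (linPoly (Ngen a b)) =
      f (exp (a * I)) * s + f (exp (-a * I)) * t + f (exp (b * I)) +
        f (exp (-b * I)) * (s * t) := by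
    rw [(hcos_sin a).1, (hcos_sin a).2, (hcos_sin b).1, (hcos_sin b).2]
    simp only [nullSubst, Algebra.smul_def, Polynomial.algebraMap_apply, Polynomial.algebraMap_eq,
      map_neg, linPoly, Ngen, ofReal_cos, ofReal_sin, Fin.sum_univ_four, Matrix.cons_val_zero,
      Matrix.cons_val_one, Matrix.cons_val, map_add, map_mul, algHom_C,
      MvPolynomial.aeval_X, map_sub, f]
    linear_combination (-(Polynomial.C (Polynomial.C (cos (b : ℂ)))) * (1 + s * t)) * hI
  rw [hlin]
  simp only [map_mul, map_add]
  linear_combination (-f (exp (-b * I)) * (s * t)) * hexp a - (f (exp (-a * I)) * t) * hexp b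

theorem cexp_natCast_mul_alphaK (k j : ℕ) :
    Complex.exp (((j * alphaK k : ℝ) : ℂ) * Complex.I) = ZMod.stdAddChar (j : ZMod (k + 1)) := by
  have h := ZMod.stdAddChar_coe (N := k + 1) j
  push_cast at h
  rw [h, alphaK]
  congr 1
  push_cast
  ring

theorem cexp_neg_natCast_mul_alphaK (k j : ℕ) :
    Complex.exp (-((j * alphaK k : ℝ) : ℂ) * Complex.I) =
      ZMod.stdAddChar (-(j : ZMod (k + 1))) := by
  rw [neg_mul, Complex.exp_neg, cexp_natCast_mul_alphaK, AddChar.map_neg_eq_inv]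

theorem coeff_coeff_nullSubst_Phi (k I J i m : ℕ) (hi : i ≤ k) :
    ((nullSubst (Phi k I J)).coeff m).coeff i =
      k.choose i * k.choose m * (ZMod.stdAddChar (-J : ZMod (k + 1)) *
        ZMod.stdAddChar (i * (I - J) - m * (I + J) : ZMod (k + 1))) := by
  rw [Phi, map_pow, NIJ, nullSubst_linPoly_Ngen, mul_pow, ← map_pow, Polynomial.coeff_C_mul,
    ← Polynomial.C_1, Polynomial.coeff_C_mul_X_add_C_pow, one_pow, mul_one, ← map_pow,
    ← map_natCast Polynomial.C, ← map_mul, Polynomial.coeff_mul_C,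
    Polynomial.coeff_C_mul_X_add_C_pow]
  simp only [cexp_natCast_mul_alphaK, cexp_neg_natCast_mul_alphaK, ← AddChar.map_nsmul_eq_pow,
    ← AddChar.map_add_eq_mul]
  rw [mul_mul_mul_comm, ← AddChar.map_add_eq_mul, mul_comm]
  congr 2
  have hk : (k : ZMod (k + 1)) + 1 = 0 := by exact_mod_cast ZMod.natCast_self (k + 1)
  simp only [nsmul_eq_mul, Nat.cast_sub hi]
  linear_combination (J : ZMod (k + 1)) * hk

open Function

noncomputable def dotChar (n : ℕ) [NeZero n] (ω : ZMod n × ZMod n) :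
    AddChar (ZMod n × ZMod n) ℂ :=
  (ZMod.stdAddChar.compAddMonoidHom (AddMonoidHom.fst _ _ + AddMonoidHom.snd _ _)).mulShift ω

theorem dotChar_apply (n : ℕ) [NeZero n] (ω g : ZMod n × ZMod n) :
    dotChar n ω g = ZMod.stdAddChar (ω.1 * g.1 + ω.2 * g.2) := rfl

theorem dotChar_injective (n : ℕ) [NeZero n] : Injective (dotChar n) := by
  intro ω ω' h
  have h1 := congrArg (· (1, 0)) h
  have h2 := congrArg (· (0, 1)) h
  simp only [dotChar_apply, mul_one, mul_zero, add_zero, zero_add,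
    ZMod.injective_stdAddChar.eq_iff] at h1 h2
  exact Prod.ext h1 h2

theorem linearIndependent_dotChar (n : ℕ) [NeZero n] :
    LinearIndependent ℂ fun ω => ⇑(dotChar n ω) :=
  (AddChar.linearIndependent _ ℂ).comp _ (dotChar_injective n)

theorem injective_sub_neg_add {R : Type*} [CommRing R] (h2 : IsUnit (2 : R)) :
    Injective fun x : R × R => (x.1 - x.2, -(x.1 + x.2)) := by
  rintro ⟨a, b⟩ ⟨c, d⟩ h
  simp only [Prod.mk.injEq] at h
  obtain ⟨hsub, hadd⟩ := h
  have hac : a = c := h2.mul_left_cancel (by linear_combination hsub - hadd)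
  exact Prod.ext hac (by linear_combination hac - hsub)

open Polynomial in
noncomputable def coeffTransform (k : ℕ) :
    MvPolynomial (Fin 4) ℂ →ₗ[ℂ] (ZMod (k + 1) × ZMod (k + 1) → ℂ) :=
  LinearMap.pi fun g => ((k.choose g.1.val * k.choose g.2.val : ℂ)⁻¹) •
    (lcoeff ℂ g.1.val ∘ₗ (lcoeff ℂ[X] g.2.val).restrictScalars ℂ ∘ₗ nullSubst.toLinearMap)

theorem coeffTransform_Phi (k I J : ℕ) :
    coeffTransform k (Phi k I J) =
      ZMod.stdAddChar (-J : ZMod (k + 1)) •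
        ⇑(dotChar (k + 1) ((I - J : ZMod (k + 1)), -(I + J))) := by
  ext g
  have hval : ∀ x : ZMod (k + 1), x.val ≤ k := fun x => Nat.lt_succ_iff.mp (ZMod.val_lt x)
  have hB : (k.choose g.1.val * k.choose g.2.val : ℂ) ≠ 0 :=
    mul_ne_zero (Nat.cast_ne_zero.mpr (Nat.choose_pos (hval g.1)).ne')
      (Nat.cast_ne_zero.mpr (Nat.choose_pos (hval g.2)).ne')
  simp only [coeffTransform, LinearMap.pi_apply, LinearMap.smul_apply, LinearMap.comp_apply,
    LinearMap.restrictScalars_apply, Polynomial.lcoeff_apply, AlgHom.toLinearMap_apply, smul_eq_mul,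
    coeff_coeff_nullSubst_Phi k I J _ _ (hval g.1), ZMod.natCast_zmod_val, Pi.smul_apply,
    dotChar_apply]
  rw [← mul_assoc, inv_mul_cancel₀ hB, one_mul]
  congr 2
  ring

/-- For `k` even, the `(k+1)²` polynomials `Φᵏ_IJ`, `I,J ∈ {0,…,k}`, are linearly
independent over `ℂ`. -/
theorem phi_linearIndependent (k : ℕ) (hk : Even k) :
    LinearIndependent ℂ
      (fun IJ : Fin (k + 1) × Fin (k + 1) => Phi k (IJ.1 : ℕ) (IJ.2 : ℕ)) := by
  have h2 : IsUnit (2 : ZMod (k + 1)) := by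
    exact_mod_cast (ZMod.isUnit_iff_coprime 2 (k + 1)).mpr (Nat.coprime_two_left.mpr hk.add_one)
  have hcast : Injective fun I : Fin (k + 1) => ((I : ℕ) : ZMod (k + 1)) := by
    intro I J h
    have := congrArg ZMod.val h
    rwa [ZMod.val_natCast_of_lt I.isLt, ZMod.val_natCast_of_lt J.isLt, ← Fin.ext_iff] at this
  have hchars := ((linearIndependent_dotChar (k + 1)).comp _
    ((injective_sub_neg_add h2).comp (hcast.prodMap hcast))).units_smul
    fun IJ => (AddChar.val_isUnit ZMod.stdAddChar (-(IJ.2 : ℕ) : ZMod (k + 1))).unit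
  refine LinearIndependent.of_comp (coeffTransform k) ?_
  convert hchars using 1
  funext IJ
  exact coeffTransform_Phi k IJ.1 IJ.2
end

section
/- Let k be an even natural number and I,J ∈ {0,…,k}. The complex quaternion n_IJ is null, i.e. n_IJ · n̄_IJ = 0 (equivalently ⟨n_IJ·n_IJ⟩ = 0), and the auxiliary quaternions satisfy ⟨a·n_IJ⟩ = ρ^I, ⟨ā·n_IJ⟩ = ρ^{−I}, ⟨b·n_IJ⟩ = ρ^J, ⟨d·n_IJ⟩ = ρ^{−J}. -/
/-- The scalar product `⟨q·q'⟩ = aa' + bb' + cc' + dd'` of two complex quaternions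
(the scalar part of `(q q̄' + q' q̄)/2`). -/
noncomputable def scalProd (q q' : Quaternion ℂ) : ℂ :=
  q.re * q'.re + q.imI * q'.imI + q.imJ * q'.imJ + q.imK * q'.imK

/-- `ρ := e^{2πi/(k+1)}`, a primitive `(k+1)`-th root of unity. -/
noncomputable def rhoK (k : ℕ) : ℂ := Complex.exp (2 * Real.pi * Complex.I / (k + 1))

/-- The complex quaternion `n_IJ = cos(Iα) + i sin(Jα) j₁ + i cos(Jα) j₂ + sin(Iα) j₃`. -/
noncomputable def nQ (k I J : ℕ) : Quaternion ℂ :=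
  ⟨(Real.cos (I * alphaK k) : ℂ), Complex.I * (Real.sin (J * alphaK k) : ℂ),
    Complex.I * (Real.cos (J * alphaK k) : ℂ), (Real.sin (I * alphaK k) : ℂ)⟩

/-- The auxiliary complex quaternion `a = 1 + i j₃`. -/
noncomputable def qa : Quaternion ℂ := ⟨1, 0, 0, Complex.I⟩
/-- The auxiliary complex quaternion `b = j₁ − i j₂`. -/
noncomputable def qb : Quaternion ℂ := ⟨0, 1, -Complex.I, 0⟩
/-- The auxiliary complex quaternion `d = −j₁ − i j₂`. -/
noncomputable def qd : Quaternion ℂ := ⟨0, -1, -Complex.I, 0⟩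

open Complex

lemma rhoK_zpow (k : ℕ) (n : ℤ) :
    rhoK k ^ n = Real.cos (n * alphaK k) + Real.sin (n * alphaK k) * I := by
  have hk : (k : ℂ) + 1 ≠ 0 := by exact_mod_cast k.succ_ne_zero
  rw [ofReal_cos, ofReal_sin, ← exp_mul_I, rhoK, ← exp_int_mul, alphaK]
  congr 1
  push_cast
  field_simp

lemma rhoK_pow (k n : ℕ) :
    rhoK k ^ n = Real.cos (n * alphaK k) + Real.sin (n * alphaK k) * I := by
  simpa using rhoK_zpow k n

lemma rhoK_zpow_neg_natCast (k n : ℕ) :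
    rhoK k ^ (-(n : ℤ)) = Real.cos (n * alphaK k) - Real.sin (n * alphaK k) * I := by
  simpa [Real.cos_neg, Real.sin_neg, sub_eq_add_neg] using rhoK_zpow k (-n)

lemma scalProd_nQ_self (k m n : ℕ) : scalProd (nQ k m n) (nQ k m n) = 0 := by
  simp only [scalProd, nQ, ofReal_cos, ofReal_sin]
  linear_combination cos_sq_add_sin_sq ((m * alphaK k : ℝ) : ℂ)
    + I ^ 2 * sin_sq_add_cos_sq ((n * alphaK k : ℝ) : ℂ) + I_sq

lemma scalProd_qa_nQ (k m n : ℕ) : scalProd qa (nQ k m n) = rhoK k ^ m := by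
  rw [rhoK_pow, scalProd, nQ, qa]
  ring

lemma scalProd_star_qa_nQ (k m n : ℕ) : scalProd (star qa) (nQ k m n) = rhoK k ^ (-(m : ℤ)) := by
  rw [rhoK_zpow_neg_natCast, scalProd, Quaternion.re_star, Quaternion.imI_star,
    Quaternion.imJ_star, Quaternion.imK_star, nQ, qa]
  ring

lemma scalProd_qb_nQ (k m n : ℕ) : scalProd qb (nQ k m n) = rhoK k ^ n := by
  rw [rhoK_pow, scalProd, nQ, qb]
  linear_combination -(Real.cos (n * alphaK k) : ℂ) * I_sq

lemma scalProd_qd_nQ (k m n : ℕ) : scalProd qd (nQ k m n) = rhoK k ^ (-(n : ℤ)) := by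
  rw [rhoK_zpow_neg_natCast, scalProd, nQ, qd]
  linear_combination -(Real.cos (n * alphaK k) : ℂ) * I_sq

theorem nQ_null_and_aux_scalProds_general (k : ℕ) (I J : Fin (k + 1)) :
    scalProd (nQ k I J) (nQ k I J) = 0
    ∧ scalProd qa (nQ k I J) = rhoK k ^ (I : ℕ)
    ∧ scalProd (star qa) (nQ k I J) = rhoK k ^ (-(I : ℤ))
    ∧ scalProd qb (nQ k I J) = rhoK k ^ (J : ℕ)
    ∧ scalProd qd (nQ k I J) = rhoK k ^ (-(J : ℤ)) :=
  ⟨scalProd_nQ_self k I J, scalProd_qa_nQ k I J, scalProd_star_qa_nQ k I J,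
    scalProd_qb_nQ k I J, scalProd_qd_nQ k I J⟩

/-- The complex quaternion `n_IJ` is null (`⟨n_IJ·n_IJ⟩ = 0`), and the auxiliary
quaternions satisfy `⟨a·n_IJ⟩ = ρ^I`, `⟨ā·n_IJ⟩ = ρ^{−I}`, `⟨b·n_IJ⟩ = ρ^J`,
`⟨d·n_IJ⟩ = ρ^{−J}`. -/
theorem nQ_null_and_aux_scalProds (k : ℕ) (hk : Even k) (I J : Fin (k + 1)) :
    scalProd (nQ k I J) (nQ k I J) = 0
    ∧ scalProd qa (nQ k I J) = rhoK k ^ (I : ℕ)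
    ∧ scalProd (star qa) (nQ k I J) = rhoK k ^ (-(I : ℤ))
    ∧ scalProd qb (nQ k I J) = rhoK k ^ (J : ℕ)
    ∧ scalProd qd (nQ k I J) = rhoK k ^ (-(J : ℤ)) :=
  nQ_null_and_aux_scalProds_general k I J
end

section
/- Let k be a natural number, p ≥ 1 a natural number, and q an integer. Let g be the rotation of ℝ⁴ acting on coordinates by (x⁰ + i x³) ↦ e^{2πi/p}(x⁰ + i x³) and (x¹ + i x²) ↦ e^{2πiq/p}(x¹ + i x²) (the holonomy generator of the lens space L(p,q)). Then the ℂ-dimension of the subspace of 𝒱ᵏ consisting of polynomials f with f ∘ g = f equals the number of pairs (ℓ,m) ∈ ℤ × ℤ satisfying |ℓ| + |m| ≤ k, ℓ + m ≡ k (mod 2), and ℓ + q·m ≡ 0 (mod p). -/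
open MvPolynomial

/-- The substitution describing the rotation of `ℝ⁴` (extended to `ℂ⁴`) acting by
`(x⁰ + i x³) ↦ e^{iψ₁}(x⁰ + i x³)` and `(x¹ + i x²) ↦ e^{iψ₂}(x¹ + i x²)`; the
`μ`-th entry is the `μ`-th coordinate of `g x` as a linear polynomial in `x`. -/
noncomputable def rotSub (ψ₁ ψ₂ : ℝ) : Fin 4 → MvPolynomial (Fin 4) ℂ :=
  ![C ((Real.cos ψ₁ : ℂ)) * X 0 - C ((Real.sin ψ₁ : ℂ)) * X 3,
    C ((Real.cos ψ₂ : ℂ)) * X 1 - C ((Real.sin ψ₂ : ℂ)) * X 2,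
    C ((Real.sin ψ₂ : ℂ)) * X 1 + C ((Real.cos ψ₂ : ℂ)) * X 2,
    C ((Real.sin ψ₁ : ℂ)) * X 0 + C ((Real.cos ψ₁ : ℂ)) * X 3]

/-!
In the coordinates `z₀ = x₀ + i x₃`, `z̄₀ = x₀ - i x₃`, `z₁ = x₁ + i x₂`, `z̄₁ = x₁ - i x₂` the
Laplacian becomes `4 (∂_{z₀} ∂_{z̄₀} + ∂_{z₁} ∂_{z̄₁})` and `g` becomes diagonal: it multiplies
`z₀ᵃ z̄₀ᵇ z₁ᶜ z̄₁ᵈ` by `ζ ^ (ℓ + q m)`, where `ζ = e^{2πi/p}` and `(ℓ, m) = (a - b, c - d)` is the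
weight of the monomial. Harmonicity is a two-term recursion between the coefficients along each
diagonal `(a + j, b + j, c - j, d - j)`, so a harmonic form of degree `k` is determined by its
coefficients at the monomials with `a = 0` or `b = 0`, and conversely each of these can be
prescribed. These monomials are indexed by their weights, which are exactly the `(ℓ, m)` with
`|ℓ| + |m| ≤ k` and `ℓ + m ≡ k (mod 2)`; `g` fixes the resulting basis vector of `𝒱ᵏ` iff
`p ∣ ℓ + q m`.
-/

noncomputable section

namespace MvPolynomial

variable {R σ : Type*}

theorem pderiv_pderiv_comm [CommRing R] (i j : σ) (f : MvPolynomial σ R) :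
    pderiv i (pderiv j f) = pderiv j (pderiv i f) := by
  classical
  have h : ⁅pderiv i, pderiv j⁆ = (0 : Derivation R (MvPolynomial σ R) (MvPolynomial σ R)) :=
    derivation_ext fun k => by
      rw [Derivation.commutator_apply, pderiv_X, pderiv_X, Pi.single_apply, Pi.single_apply]
      split_ifs <;> simp
  rw [← sub_eq_zero, ← Derivation.commutator_apply, h, Derivation.zero_apply]

theorem pderiv_aeval [CommSemiring R] {τ : Type*} [Fintype τ] (φ : τ → MvPolynomial σ R)
    (i : σ) (f : MvPolynomial τ R) :
    pderiv i (aeval φ f) = ∑ j, pderiv i (φ j) * aeval φ (pderiv j f) := by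
  classical
  induction f using MvPolynomial.induction_on with
  | C a => simp only [aeval_C, algebraMap_eq, pderiv_C, map_zero, mul_zero, Finset.sum_const_zero]
  | add f g hf hg => simp only [map_add, hf, hg, mul_add, Finset.sum_add_distrib]
  | mul_X f n ih =>
    simp only [map_mul, aeval_X, Derivation.leibniz, ih, smul_eq_mul, map_add, mul_add,
      Finset.sum_add_distrib, Finset.mul_sum, pderiv_X, Pi.single_apply, apply_ite (aeval φ),
      map_zero, mul_ite, mul_one, mul_zero, Finset.sum_ite_eq, Finset.mem_univ, if_true]
    ring_nf

theorem coeff_aeval_C_mul_X [CommSemiring R] (e : σ → R) (f : MvPolynomial σ R) (α : σ →₀ ℕ) :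
    coeff α (aeval (fun i => C (e i) * X i) f) = α.prod (fun i n => e i ^ n) * coeff α f := by
  classical
  induction f using MvPolynomial.induction_on' with
  | monomial s t =>
    have : aeval (fun i => C (e i) * X i) (monomial s t)
        = monomial s (t * s.prod fun i n => e i ^ n) := by
      rw [aeval_monomial, monomial_eq, C_mul, algebraMap_eq, mul_assoc]
      simp only [mul_pow, Finsupp.prod_mul, ← map_pow, ← map_finsuppProd]
    rw [this, coeff_monomial, coeff_monomial]
    split_ifs with h
    · subst h; ring
    · ring
  | add f g hf hg => simp only [map_add, coeff_add, hf, hg, mul_add]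

theorem isHomogeneous_aeval_iff [CommSemiring R] {φ ψ : σ → MvPolynomial σ R}
    (hφ : ∀ i, (φ i).IsHomogeneous 1) (hψ : ∀ i, (ψ i).IsHomogeneous 1)
    (h : Function.LeftInverse (aeval ψ) (aeval φ)) {f : MvPolynomial σ R} {k : ℕ} :
    (aeval φ f).IsHomogeneous k ↔ f.IsHomogeneous k :=
  ⟨fun hf => by simpa only [one_mul, h f] using hf.aeval ψ hψ,
    fun hf => by simpa only [one_mul] using hf.aeval φ hφ⟩

end MvPolynomial

def monExp (a b c d : ℕ) : Fin 4 →₀ ℕ := Finsupp.equivFunOnFinite.symm ![a, b, c, d]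

section monExp

variable {a b c d : ℕ}

@[simp] lemma monExp_apply_zero : monExp a b c d 0 = a := rfl
@[simp] lemma monExp_apply_one : monExp a b c d 1 = b := rfl
@[simp] lemma monExp_apply_two : monExp a b c d 2 = c := rfl
@[simp] lemma monExp_apply_three : monExp a b c d 3 = d := rfl

lemma Finsupp.ext_fin_four {α β : Fin 4 →₀ ℕ} (h0 : α 0 = β 0) (h1 : α 1 = β 1)
    (h2 : α 2 = β 2) (h3 : α 3 = β 3) : α = β := by
  ext i
  fin_cases i <;> assumption

lemma eq_monExp (α : Fin 4 →₀ ℕ) : α = monExp (α 0) (α 1) (α 2) (α 3) :=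
  Finsupp.ext_fin_four rfl rfl rfl rfl

lemma monExp_inj {a' b' c' d' : ℕ} :
    monExp a b c d = monExp a' b' c' d' ↔ a = a' ∧ b = b' ∧ c = c' ∧ d = d' := by
  refine ⟨fun h => ?_, fun ⟨h0, h1, h2, h3⟩ => by rw [h0, h1, h2, h3]⟩
  simp only [Finsupp.ext_iff, Fin.forall_fin_succ, IsEmpty.forall_iff] at h
  exact ⟨h.1, h.2.1, h.2.2.1, h.2.2.2.1⟩

lemma degree_monExp : (monExp a b c d).degree = a + b + c + d := by
  rw [Finsupp.degree_eq_sum, Fin.sum_univ_four]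
  rfl

end monExp

section zLap

variable {R K : Type*}

-- `lap` in the coordinates `(z₀, z̄₀, z₁, z̄₁) = (X 0, X 1, X 2, X 3)`, divided by 4
def zLap [CommSemiring R] : MvPolynomial (Fin 4) R →ₗ[R] MvPolynomial (Fin 4) R :=
  (pderiv 0).toLinearMap ∘ₗ (pderiv 1).toLinearMap
    + (pderiv 2).toLinearMap ∘ₗ (pderiv 3).toLinearMap

lemma zLap_apply [CommSemiring R] (f : MvPolynomial (Fin 4) R) :
    zLap f = pderiv 0 (pderiv 1 f) + pderiv 2 (pderiv 3 f) := rfl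

lemma coeff_monExp_zLap [CommSemiring R] (f : MvPolynomial (Fin 4) R) (w x y z : ℕ) :
    coeff (monExp w x y z) (zLap f)
      = ((w + 1) * (x + 1) : ℕ) * coeff (monExp (w + 1) (x + 1) y z) f
        + ((y + 1) * (z + 1) : ℕ) * coeff (monExp w x (y + 1) (z + 1)) f := by
  have h01 : monExp w x y z + Finsupp.single 0 1 + Finsupp.single 1 1
      = monExp (w + 1) (x + 1) y z :=
    Finsupp.ext_fin_four (by simp) (by simp) (by simp) (by simp)
  have h23 : monExp w x y z + Finsupp.single 2 1 + Finsupp.single 3 1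
      = monExp w x (y + 1) (z + 1) :=
    Finsupp.ext_fin_four (by simp) (by simp) (by simp) (by simp)
  simp only [zLap_apply, coeff_add, coeff_pderiv, h01, h23, Finsupp.coe_add, Pi.add_apply,
    monExp_apply_zero, monExp_apply_one, monExp_apply_two, monExp_apply_three,
    Finsupp.single_eq_of_ne, ne_eq, Fin.reduceEq, not_false_eq_true, add_zero, Nat.cast_mul,
    Nat.cast_add, Nat.cast_one]
  ring

variable [Field K] [CharZero K]

/-- By `coeff_monExp_zLap`, along each diagonal `β + j • (1, 1, -1, -1)` the coefficients of a
`zLap`-harmonic polynomial are determined by the one with `β 0 = 0` or `β 1 = 0`. -/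
lemma eq_zero_of_zLap_eq_zero {f : MvPolynomial (Fin 4) K} (hf : zLap f = 0)
    (hbase : ∀ β : Fin 4 →₀ ℕ, β 0 = 0 ∨ β 1 = 0 → coeff β f = 0) : f = 0 := by
  suffices h : ∀ n w x y : ℕ, coeff (monExp n w x y) f = 0 by
    ext β
    rw [eq_monExp β, h, coeff_zero]
  intro n
  induction n with
  | zero => exact fun w x y => hbase _ (Or.inl rfl)
  | succ n ih =>
    rintro (_ | x) y z
    · exact hbase _ (Or.inr rfl)
    · have hrec := coeff_monExp_zLap f n x y z
      rw [hf, coeff_zero, ih, mul_zero, add_zero, eq_comm, mul_eq_zero] at hrec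
      exact hrec.resolve_left (Nat.cast_ne_zero.mpr (by positivity))

end zLap

section zHarmonic

variable {K : Type*} [Field K]

def zChain (α : Fin 4 →₀ ℕ) (j : ℕ) : Fin 4 →₀ ℕ :=
  monExp (α 0 + j) (α 1 + j) (α 2 - j) (α 3 - j)

-- solves the recursion of `coeff_monExp_zLap` along `zChain α`
def zHarmonicCoeff (α : Fin 4 →₀ ℕ) : ℕ → K
  | 0 => 1
  | j + 1 => -(((α 2 - j) * (α 3 - j) : ℕ) : K) / (((α 0 + j + 1) * (α 1 + j + 1) : ℕ) : K)
      * zHarmonicCoeff α j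

lemma mul_zHarmonicCoeff_succ [CharZero K] (α : Fin 4 →₀ ℕ) (j : ℕ) :
    (((α 0 + j + 1) * (α 1 + j + 1) : ℕ) : K) * zHarmonicCoeff α (j + 1)
      = -(((α 2 - j) * (α 3 - j) : ℕ) : K) * zHarmonicCoeff α j := by
  have : (((α 0 + j + 1) * (α 1 + j + 1) : ℕ) : K) ≠ 0 := Nat.cast_ne_zero.mpr (by positivity)
  rw [zHarmonicCoeff]
  field_simp

def zHarmonic (α : Fin 4 →₀ ℕ) : MvPolynomial (Fin 4) K :=
  ∑ j ∈ Finset.range (min (α 2) (α 3) + 1), monomial (zChain α j) (zHarmonicCoeff α j)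

lemma coeff_zChain_zHarmonic {α : Fin 4 →₀ ℕ} {j : ℕ} (hj : j ≤ min (α 2) (α 3)) :
    coeff (zChain α j) (zHarmonic α : MvPolynomial (Fin 4) K) = zHarmonicCoeff α j := by
  rw [zHarmonic, coeff_sum, Finset.sum_eq_single j]
  · simp [coeff_monomial]
  · intro i _ hij
    rw [coeff_monomial, if_neg]
    simp only [zChain, monExp_inj]
    omega
  · simp
    omega

lemma coeff_zHarmonic_eq_zero {α β : Fin 4 →₀ ℕ}
    (h : ∀ j ≤ min (α 2) (α 3), zChain α j ≠ β) :
    coeff β (zHarmonic α : MvPolynomial (Fin 4) K) = 0 := by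
  rw [zHarmonic, coeff_sum]
  refine Finset.sum_eq_zero fun j hj => ?_
  rw [coeff_monomial, if_neg (h j (Nat.lt_succ_iff.mp (Finset.mem_range.mp hj)))]

lemma coeff_zHarmonic_of_base {α β : Fin 4 →₀ ℕ} (hβ : β 0 = 0 ∨ β 1 = 0) :
    coeff β (zHarmonic α : MvPolynomial (Fin 4) K) = if β = α then 1 else 0 := by
  split_ifs with h
  · subst h
    have h0 : zChain β 0 = β := by simp [zChain, ← eq_monExp]
    nth_rw 1 [← h0]
    rw [coeff_zChain_zHarmonic (Nat.zero_le _), zHarmonicCoeff]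
  · refine coeff_zHarmonic_eq_zero fun j _ hj => h ?_
    subst hj
    obtain rfl : j = 0 := by
      simp only [zChain, monExp_apply_zero, monExp_apply_one] at hβ
      omega
    simp [zChain, ← eq_monExp]

lemma isHomogeneous_zHarmonic (α : Fin 4 →₀ ℕ) :
    (zHarmonic α : MvPolynomial (Fin 4) K).IsHomogeneous α.degree := by
  refine IsHomogeneous.sum _ _ _ fun j hj => isHomogeneous_monomial _ ?_
  have := Nat.lt_succ_iff.mp (Finset.mem_range.mp hj)
  rw [zChain, degree_monExp, eq_monExp α, degree_monExp]
  simp only [monExp_apply_zero, monExp_apply_one, monExp_apply_two, monExp_apply_three]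
  omega

lemma zLap_zHarmonic [CharZero K] {α : Fin 4 →₀ ℕ} (hα : α 0 = 0 ∨ α 1 = 0) :
    zLap (zHarmonic α : MvPolynomial (Fin 4) K) = 0 := by
  ext β
  rw [eq_monExp β, coeff_monExp_zLap, coeff_zero]
  set w := β 0; set x := β 1; set y := β 2; set z := β 3
  by_cases hc : ∃ j < min (α 2) (α 3), zChain α j = monExp w x (y + 1) (z + 1)
  · obtain ⟨j, hj, hjβ⟩ := hc
    have hsucc : zChain α (j + 1) = monExp (w + 1) (x + 1) y z := by
      simp only [zChain, monExp_inj] at hjβ ⊢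
      omega
    rw [← hjβ, ← hsucc, coeff_zChain_zHarmonic hj.le, coeff_zChain_zHarmonic hj]
    simp only [zChain, monExp_inj] at hjβ
    have hrec := mul_zHarmonicCoeff_succ (K := K) α j
    rw [← hjβ.1, ← hjβ.2.1, show y + 1 = α 2 - j by omega, show z + 1 = α 3 - j by omega,
      hrec]
    ring
  · push Not at hc
    rw [coeff_zHarmonic_eq_zero (α := α) (β := monExp w x (y + 1) (z + 1)), mul_zero, add_zero]
    · rw [coeff_zHarmonic_eq_zero, mul_zero]
      intro j hj hjβ
      obtain ⟨i, rfl⟩ : ∃ i, j = i + 1 := Nat.exists_eq_add_one.mpr (by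
        simp only [zChain, monExp_inj] at hjβ
        omega)
      refine hc i (by omega) ?_
      simp only [zChain, monExp_inj] at hjβ ⊢
      omega
    · intro j hj hjβ
      refine hc j ?_ hjβ
      simp only [zChain, monExp_inj] at hjβ
      omega

end zHarmonic

section Torus

variable {K : Type*} [Field K]

def torusSub (u v : Kˣ) : Fin 4 → MvPolynomial (Fin 4) K :=
  fun i => C ((![u, u⁻¹, v, v⁻¹] i : Kˣ) : K) * X i

def zWeight (α : Fin 4 →₀ ℕ) : ℤ × ℤ := ((α 0 : ℤ) - α 1, (α 2 : ℤ) - α 3)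

lemma coeff_aeval_torusSub (u v : Kˣ) (f : MvPolynomial (Fin 4) K) (α : Fin 4 →₀ ℕ) :
    coeff α (aeval (torusSub u v) f)
      = ((u ^ (zWeight α).1 * v ^ (zWeight α).2 : Kˣ) : K) * coeff α f := by
  unfold torusSub
  rw [coeff_aeval_C_mul_X, Finsupp.prod_fintype _ _ fun _ => pow_zero _, Fin.prod_univ_four]
  congr 1
  have : u ^ α 0 * u⁻¹ ^ α 1 * v ^ α 2 * v⁻¹ ^ α 3
      = u ^ (zWeight α).1 * v ^ (zWeight α).2 := by
    simp only [zWeight, zpow_sub, zpow_natCast, inv_pow]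
    group
  simp [← this]

lemma aeval_torusSub_eq_self_iff {u v : Kˣ} {f : MvPolynomial (Fin 4) K} :
    aeval (torusSub u v) f = f
      ↔ ∀ α ∈ f.support, u ^ (zWeight α).1 * v ^ (zWeight α).2 = 1 := by
  simp only [MvPolynomial.ext_iff, coeff_aeval_torusSub, mem_support_iff]
  refine forall_congr' fun α => ?_
  rw [← sub_eq_zero, ← sub_one_mul, mul_eq_zero, sub_eq_zero, Units.val_eq_one,
    or_iff_not_imp_right]

lemma zWeight_zChain {α : Fin 4 →₀ ℕ} {j : ℕ} (hj : j ≤ min (α 2) (α 3)) :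
    zWeight (zChain α j) = zWeight α := by
  simp only [zWeight, zChain, monExp_apply_zero, monExp_apply_one, monExp_apply_two,
    monExp_apply_three, Prod.mk.injEq]
  omega

lemma zWeight_of_mem_support_zHarmonic {α β : Fin 4 →₀ ℕ}
    (hβ : β ∈ (zHarmonic α : MvPolynomial (Fin 4) K).support) : zWeight β = zWeight α := by
  by_contra h
  refine mem_support_iff.mp hβ (coeff_zHarmonic_eq_zero fun j hj hjβ => h ?_)
  rw [← hjβ, zWeight_zChain hj]

def harmonicWeights (k : ℕ) : Finset (ℤ × ℤ) :=
  {lm ∈ Finset.Icc (-(k : ℤ)) k ×ˢ Finset.Icc (-(k : ℤ)) k |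
    |lm.1| + |lm.2| ≤ k ∧ 2 ∣ lm.1 + lm.2 - k}

lemma mem_harmonicWeights {k : ℕ} {lm : ℤ × ℤ} :
    lm ∈ harmonicWeights k ↔ |lm.1| + |lm.2| ≤ k ∧ 2 ∣ lm.1 + lm.2 - k := by
  rw [harmonicWeights, Finset.mem_filter, Finset.mem_product, Finset.mem_Icc, Finset.mem_Icc,
    and_iff_right_iff_imp]
  intro h
  have := abs_nonneg lm.1
  have := abs_nonneg lm.2
  refine ⟨abs_le.mp ?_, abs_le.mp ?_⟩ <;> linarith [h.1]

/-- For `lm ∈ harmonicWeights k`, the exponent of degree `k` and weight `lm` in which `X 0` or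
`X 1` does not occur. -/
def baseExp (k : ℕ) (lm : ℤ × ℤ) : Fin 4 →₀ ℕ :=
  let n := (k - lm.1.natAbs - lm.2.natAbs) / 2
  monExp lm.1.toNat (-lm.1).toNat (lm.2.toNat + n) ((-lm.2).toNat + n)

section baseExp

variable {k : ℕ} {lm : ℤ × ℤ}

lemma baseExp_zero_eq_zero_or (lm : ℤ × ℤ) : baseExp k lm 0 = 0 ∨ baseExp k lm 1 = 0 := by
  simp only [baseExp, monExp_apply_zero, monExp_apply_one]
  omega

lemma degree_baseExp (h : lm ∈ harmonicWeights k) : (baseExp k lm).degree = k := by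
  rw [mem_harmonicWeights, Int.abs_eq_natAbs, Int.abs_eq_natAbs] at h
  rw [baseExp, degree_monExp]
  omega

lemma zWeight_baseExp (lm : ℤ × ℤ) : zWeight (baseExp k lm) = lm := by
  simp only [zWeight, baseExp, monExp_apply_zero, monExp_apply_one, monExp_apply_two,
    monExp_apply_three]
  ext <;> simp

lemma zWeight_mem_harmonicWeights (α : Fin 4 →₀ ℕ) : zWeight α ∈ harmonicWeights α.degree := by
  rw [mem_harmonicWeights, Int.abs_eq_natAbs, Int.abs_eq_natAbs, eq_monExp α, degree_monExp]
  simp only [zWeight, monExp_apply_zero, monExp_apply_one, monExp_apply_two, monExp_apply_three]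
  omega

lemma baseExp_zWeight {α : Fin 4 →₀ ℕ} (hα : α 0 = 0 ∨ α 1 = 0) :
    baseExp α.degree (zWeight α) = α := by
  rw [eq_monExp α, degree_monExp]
  simp only [baseExp, zWeight, monExp_apply_zero, monExp_apply_one, monExp_apply_two,
    monExp_apply_three, monExp_inj]
  omega

end baseExp

end Torus

section ModelCount

variable {K : Type*} [Field K]

def zHarmonicFixed (k : ℕ) (u v : Kˣ) : Submodule K (MvPolynomial (Fin 4) K) :=
  homogeneousSubmodule (Fin 4) K k ⊓ LinearMap.ker zLap
    ⊓ LinearMap.ker ((aeval (torusSub u v)).toLinearMap - LinearMap.id)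

lemma mem_zHarmonicFixed {k : ℕ} {u v : Kˣ} {f : MvPolynomial (Fin 4) K} :
    f ∈ zHarmonicFixed k u v ↔ f.IsHomogeneous k ∧ zLap f = 0 ∧ aeval (torusSub u v) f = f := by
  simp [zHarmonicFixed, sub_eq_zero, and_assoc]

open scoped Classical in
def fixedWeights (k : ℕ) (u v : Kˣ) : Finset (ℤ × ℤ) :=
  {lm ∈ harmonicWeights k | u ^ lm.1 * v ^ lm.2 = 1}

variable {k : ℕ} {u v : Kˣ}

open scoped Classical in
lemma mem_fixedWeights {lm : ℤ × ℤ} :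
    lm ∈ fixedWeights k u v ↔ lm ∈ harmonicWeights k ∧ u ^ lm.1 * v ^ lm.2 = 1 := by
  rw [fixedWeights, Finset.mem_filter]

lemma zHarmonic_baseExp_mem [CharZero K] {lm : ℤ × ℤ} (hlm : lm ∈ fixedWeights k u v) :
    zHarmonic (baseExp k lm) ∈ zHarmonicFixed k u v := by
  rw [mem_fixedWeights] at hlm
  refine mem_zHarmonicFixed.mpr ⟨?_, zLap_zHarmonic (baseExp_zero_eq_zero_or lm), ?_⟩
  · simpa [degree_baseExp hlm.1] using isHomogeneous_zHarmonic (K := K) (baseExp k lm)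
  · refine aeval_torusSub_eq_self_iff.mpr fun β hβ => ?_
    rw [zWeight_of_mem_support_zHarmonic hβ, zWeight_baseExp]
    exact hlm.2

lemma eq_zero_of_mem_zHarmonicFixed [CharZero K] {f : MvPolynomial (Fin 4) K}
    (hf : f ∈ zHarmonicFixed k u v)
    (hbase : ∀ lm ∈ fixedWeights k u v, coeff (baseExp k lm) f = 0) : f = 0 := by
  obtain ⟨hhom, hharm, hfix⟩ := mem_zHarmonicFixed.mp hf
  refine eq_zero_of_zLap_eq_zero hharm fun β hβ => ?_
  by_contra hβf
  have hdeg : β.degree = k := by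
    rw [Finsupp.degree_eq_weight_one]
    exact hhom hβf
  have hχ := aeval_torusSub_eq_self_iff.mp hfix β (mem_support_iff.mpr hβf)
  refine hβf ?_
  have hmem : zWeight β ∈ fixedWeights k u v := by
    rw [mem_fixedWeights, ← hdeg]
    exact ⟨zWeight_mem_harmonicWeights β, hχ⟩
  simpa [← hdeg, baseExp_zWeight hβ] using hbase _ hmem

lemma coeff_baseExp_zHarmonic_baseExp {lm lm' : ℤ × ℤ} :
    coeff (baseExp k lm') (zHarmonic (baseExp k lm) : MvPolynomial (Fin 4) K)
      = if lm' = lm then 1 else 0 := by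
  rw [coeff_zHarmonic_of_base (baseExp_zero_eq_zero_or lm')]
  refine if_congr ⟨fun h => ?_, congrArg _⟩ rfl rfl
  rw [← zWeight_baseExp (k := k) lm', h, zWeight_baseExp]

theorem finrank_zHarmonicFixed [CharZero K] :
    Module.finrank K (zHarmonicFixed k u v) = (fixedWeights k u v).card := by
  set W := zHarmonicFixed k u v
  set S := fixedWeights k u v
  let Φ : W →ₗ[K] (S → K) :=
    LinearMap.pi fun lm => (lcoeff K (baseExp k lm)).comp W.subtype
  have hΦ : Function.Injective Φ := by
    refine (injective_iff_map_eq_zero Φ).mpr fun f hf => Subtype.ext ?_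
    refine eq_zero_of_mem_zHarmonicFixed f.2 fun lm hlm => ?_
    exact congrFun hf ⟨lm, hlm⟩
  have : Module.Finite K W := Module.Finite.of_injective Φ hΦ
  let b : S → W := fun lm => ⟨zHarmonic (baseExp k lm), zHarmonic_baseExp_mem lm.2⟩
  have hb : Φ ∘ b = Pi.basisFun K S := by
    funext lm lm'
    simp only [Function.comp_apply, Φ, b, LinearMap.pi_apply, LinearMap.comp_apply,
      Submodule.subtype_apply, lcoeff_apply, coeff_baseExp_zHarmonic_baseExp, Pi.basisFun_apply,
      Pi.single_apply, Subtype.ext_iff]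
  apply le_antisymm
  · simpa using LinearMap.finrank_le_finrank_of_injective hΦ
  · have hli := LinearIndependent.of_comp Φ (hb ▸ (Pi.basisFun K S).linearIndependent)
    simpa using hli.fintype_card_le_finrank

end ModelCount

section ComplexCoordinates

open Complex

def zSub : Fin 4 → MvPolynomial (Fin 4) ℂ :=
  ![X 0 + I • X 3, X 0 - I • X 3, X 1 + I • X 2, X 1 - I • X 2]

def zSubInv : Fin 4 → MvPolynomial (Fin 4) ℂ :=
  ![(2⁻¹ : ℂ) • (X 0 + X 1), (2⁻¹ : ℂ) • (X 2 + X 3), (-I / 2) • (X 2 - X 3),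
    (-I / 2) • (X 0 - X 1)]

lemma aeval_zSub_comp_aeval_zSubInv : (aeval zSub).comp (aeval zSubInv) = AlgHom.id ℂ _ := by
  refine algHom_ext fun i => ?_
  fin_cases i <;>
    simp only [AlgHom.comp_apply, AlgHom.id_apply, aeval_X, zSub, zSubInv, Fin.zero_eta,
      Fin.mk_one, Fin.reduceFinMk, Matrix.cons_val, map_add, map_sub, map_smul] <;>
    match_scalars <;> grind [I_sq]

lemma aeval_zSubInv_comp_aeval_zSub : (aeval zSubInv).comp (aeval zSub) = AlgHom.id ℂ _ := by
  refine algHom_ext fun i => ?_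
  fin_cases i <;>
    simp only [AlgHom.comp_apply, AlgHom.id_apply, aeval_X, zSub, zSubInv, Fin.zero_eta,
      Fin.mk_one, Fin.reduceFinMk, Matrix.cons_val, map_add, map_sub, map_smul] <;>
    match_scalars <;> grind [I_sq]

lemma lap_apply (f : MvPolynomial (Fin 4) ℂ) : lap f = ∑ μ, pderiv μ (pderiv μ f) := by
  rw [lap, LinearMap.sum_apply]
  rfl

/-- By the chain rule `lap ∘ aeval zSub = ∑ l j, G l j • aeval zSub ∘ ∂_l ∂_j`, where `G` is the
Gram matrix of the constant Jacobian of `zSub`: `G 0 1 = G 1 0 = G 2 3 = G 3 2 = 2`, all other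
entries vanish. -/
lemma lap_aeval_zSub (f : MvPolynomial (Fin 4) ℂ) :
    lap (aeval zSub f) = (4 : ℂ) • aeval zSub (zLap f) := by
  have hJ : ∀ μ j, pderiv μ (pderiv μ (zSub j)) = 0 := by
    intro μ j
    fin_cases j <;> simp [zSub, pderiv_X, Pi.single_apply, apply_ite (pderiv μ)]
  have h2 : ∀ μ, pderiv μ (pderiv μ (aeval zSub f))
      = ∑ j, ∑ l, pderiv μ (zSub j) * pderiv μ (zSub l) * aeval zSub (pderiv l (pderiv j f)) := by
    intro μ
    rw [pderiv_aeval, map_sum]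
    refine Finset.sum_congr rfl fun j _ => ?_
    rw [Derivation.leibniz, pderiv_aeval, hJ, smul_zero, add_zero, smul_eq_mul, Finset.mul_sum]
    simp only [mul_assoc]
  simp only [lap_apply, h2, Fin.sum_univ_four, zLap_apply]
  simp only [zSub, Fin.isValue, Matrix.cons_val_zero, Matrix.cons_val_one, Matrix.cons_val,
    map_add, map_sub, Derivation.map_smul, pderiv_X_self, pderiv_X, Pi.single_eq_of_ne, ne_eq,
    Fin.reduceEq, not_false_eq_true, smul_zero, add_zero, sub_zero, zero_add, zero_sub, mul_zero,
    zero_mul, mul_one, one_mul, smul_mul_assoc, mul_smul_comm, neg_mul, mul_neg,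
    pderiv_pderiv_comm 1 0 f, pderiv_pderiv_comm 3 2 f]
  match_scalars <;> grind [I_sq]

lemma aeval_rotSub_comp_aeval_zSub (ψ₁ ψ₂ : ℝ) :
    (aeval (rotSub ψ₁ ψ₂)).comp (aeval zSub)
      = (aeval zSub).comp
          (aeval (torusSub (Circle.toUnits (Circle.exp ψ₁)) (Circle.toUnits (Circle.exp ψ₂)))) := by
  refine algHom_ext fun i => ?_
  fin_cases i <;>
    simp only [AlgHom.comp_apply, aeval_X, rotSub, zSub, torusSub, Fin.zero_eta, Fin.mk_one,
      Fin.reduceFinMk, Matrix.cons_val_zero, Matrix.cons_val_one, Matrix.cons_val, map_add, map_sub,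
      map_smul, C_mul', Circle.toUnits_apply, Circle.coe_exp, Units.val_inv_eq_inv_val,
      Units.val_mk0, ← exp_neg] <;>
    simp only [← neg_mul, exp_mul_I, ofReal_cos, ofReal_sin, cos_neg, sin_neg] <;>
    match_scalars <;> grind [I_sq]

def zEquiv : MvPolynomial (Fin 4) ℂ ≃ₐ[ℂ] MvPolynomial (Fin 4) ℂ :=
  AlgEquiv.ofAlgHom (aeval zSub) (aeval zSubInv) aeval_zSub_comp_aeval_zSubInv
    aeval_zSubInv_comp_aeval_zSub

lemma zEquiv_apply (f : MvPolynomial (Fin 4) ℂ) : zEquiv f = aeval zSub f := rfl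

lemma isHomogeneous_zEquiv_iff {f : MvPolynomial (Fin 4) ℂ} {k : ℕ} :
    (zEquiv f).IsHomogeneous k ↔ f.IsHomogeneous k := by
  have hzSub : ∀ i, (zSub i).IsHomogeneous 1 := by
    intro i
    fin_cases i <;> simp only [zSub, smul_eq_C_mul] <;>
      apply_rules [IsHomogeneous.add, IsHomogeneous.sub, IsHomogeneous.C_mul, isHomogeneous_X]
  have hzSubInv : ∀ i, (zSubInv i).IsHomogeneous 1 := by
    intro i
    fin_cases i <;> simp only [zSubInv, smul_eq_C_mul] <;>
      apply_rules [IsHomogeneous.add, IsHomogeneous.sub, IsHomogeneous.C_mul, isHomogeneous_X]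
  exact isHomogeneous_aeval_iff hzSub hzSubInv zEquiv.left_inv

lemma zEquiv_mem_iff (k : ℕ) (ψ₁ ψ₂ : ℝ) (f : MvPolynomial (Fin 4) ℂ) :
    zEquiv f ∈ Vk k ⊓ LinearMap.ker ((aeval (rotSub ψ₁ ψ₂)).toLinearMap - LinearMap.id)
      ↔ f ∈ zHarmonicFixed k (Circle.toUnits (Circle.exp ψ₁))
          (Circle.toUnits (Circle.exp ψ₂)) := by
  have hlap : lap (zEquiv f) = zEquiv ((4 : ℂ) • zLap f) := by
    rw [map_smul, zEquiv_apply, zEquiv_apply, lap_aeval_zSub]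
  have hrot : aeval (rotSub ψ₁ ψ₂) (zEquiv f) = zEquiv
      (aeval (torusSub (Circle.toUnits (Circle.exp ψ₁)) (Circle.toUnits (Circle.exp ψ₂))) f) :=
    DFunLike.congr_fun (aeval_rotSub_comp_aeval_zSub ψ₁ ψ₂) f
  simp only [Vk, mem_zHarmonicFixed, Submodule.mem_inf, mem_homogeneousSubmodule,
    LinearMap.mem_ker, LinearMap.sub_apply, AlgHom.toLinearMap_apply, LinearMap.id_apply,
    sub_eq_zero, hlap, hrot, isHomogeneous_zEquiv_iff, EmbeddingLike.map_eq_zero_iff, smul_eq_zero,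
    EmbeddingLike.apply_eq_iff_eq]
  norm_num [and_assoc]

lemma map_zEquiv_zHarmonicFixed (k : ℕ) (ψ₁ ψ₂ : ℝ) :
    (zHarmonicFixed k (Circle.toUnits (Circle.exp ψ₁)) (Circle.toUnits (Circle.exp ψ₂))).map
        (zEquiv.toLinearEquiv : MvPolynomial (Fin 4) ℂ →ₗ[ℂ] MvPolynomial (Fin 4) ℂ)
      = Vk k ⊓ LinearMap.ker ((aeval (rotSub ψ₁ ψ₂)).toLinearMap - LinearMap.id) := by
  ext x
  rw [Submodule.mem_map_equiv, ← zEquiv_mem_iff]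
  exact iff_of_eq (congrArg (· ∈ _) (zEquiv.apply_symm_apply x))

end ComplexCoordinates

end

lemma lens_weight_eq_one_iff {p : ℕ} (hp : p ≠ 0) (q ℓ m : ℤ) :
    Circle.toUnits (Circle.exp (2 * Real.pi / p)) ^ ℓ
        * Circle.toUnits (Circle.exp (2 * Real.pi * q / p)) ^ m = 1 ↔ (p : ℤ) ∣ ℓ + q * m := by
  set u := Circle.toUnits (Circle.exp (2 * Real.pi / p))
  have hv : Circle.toUnits (Circle.exp (2 * Real.pi * q / p)) = u ^ q := by
    rw [show 2 * Real.pi * q / p = q * (2 * Real.pi / p) by ring, Circle.exp_intCast_mul, map_zpow]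
  have hu : IsPrimitiveRoot u p := by
    refine IsPrimitiveRoot.coe_units_iff.mp ?_
    convert Complex.isPrimitiveRoot_exp p hp using 2
    simp only [u, Circle.toUnits_apply, Units.val_mk0, Circle.coe_exp]
    congr 1
    push_cast
    ring
  rw [hv, ← zpow_mul, ← zpow_add, hu.zpow_eq_one_iff_dvd]

/-- Eigenmodes of the lens space `L(p,q)`: the dimension of the subspace of `𝒱ᵏ` fixed by
the holonomy generator `g` (rotation of angles `ψ₁ = 2π/p`, `ψ₂ = 2πq/p`) equals the
number of pairs `(ℓ,m) ∈ ℤ²` with `|ℓ| + |m| ≤ k`, `ℓ + m ≡ k (mod 2)` and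
`ℓ + q·m ≡ 0 (mod p)`. -/
theorem lens_space_eigenmode_dimension (k p : ℕ) (hp : 1 ≤ p) (q : ℤ) :
    Module.finrank ℂ
      ↥(Vk k ⊓ LinearMap.ker
        ((MvPolynomial.aeval (rotSub (2 * Real.pi / p) (2 * Real.pi * q / p))).toLinearMap
          - (LinearMap.id : MvPolynomial (Fin 4) ℂ →ₗ[ℂ] MvPolynomial (Fin 4) ℂ)))
    = Set.ncard {lm : ℤ × ℤ | |lm.1| + |lm.2| ≤ (k : ℤ)
        ∧ (2 : ℤ) ∣ (lm.1 + lm.2 - (k : ℤ))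
        ∧ (p : ℤ) ∣ (lm.1 + q * lm.2)} := by
  rw [← map_zEquiv_zHarmonicFixed, LinearEquiv.finrank_map_eq, finrank_zHarmonicFixed,
    ← Set.ncard_coe_finset]
  congr 1
  ext lm
  simp only [Finset.mem_coe, mem_fixedWeights, mem_harmonicWeights,
    lens_weight_eq_one_iff (by omega : p ≠ 0), Set.mem_ofPred_eq, and_assoc]
end
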